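/- arXiv:quant-ph/0112067 — 6 statements merged into one kernel-verified Lean document; each statement's English description precedes it below -/
import Mathlib

section
/- For any real numbers a and b, the quantity (1/(2π))·∫₀^{2π} (1/4)|cos(σ−a)|·sgn(cos(σ−a))·(−sgn(cos(σ−b))) dσ equals −(1/(2π))·cos(a−b). -/
open Real MeasureTheory intervalIntegral

lemma meas_sign : Measurable Real.sign := by
  unfold Real.sign
  exact Measurable.ite measurableSet_Iio measurable_const
    (Measurable.ite measurableSet_Ioi measurable_const measurable_const)

lemma abs_mul_sign' (x : ℝ) : |x| * Real.sign x = x := by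
  rcases lt_trichotomy x 0 with h|h|h
  · rw [Real.sign_of_neg h, abs_of_neg h]; ring
  · simp [h]
  · rw [Real.sign_of_pos h, abs_of_pos h]; ring

lemma sign_abs_le (x : ℝ) : |Real.sign x| ≤ 1 := by
  rcases Real.sign_apply_eq x with h|h|h <;> simp [h]

lemma main_aux (a b : ℝ) :
    ∫ σ in (0:ℝ)..(2*π), (1/4) * Real.cos (σ - a) * (-Real.sign (Real.cos (σ - b)))
      = -Real.cos (a - b) := by
  set g : ℝ → ℝ := fun σ => (1/4) * Real.cos (σ - a) * (-Real.sign (Real.cos (σ - b))) with hg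
  have hper : Function.Periodic g (2*π) := by
    intro x; simp only [hg]
    rw [show x + 2*π - a = (x - a) + 2*π by ring, show x + 2*π - b = (x - b) + 2*π by ring,
      Real.cos_add_two_pi, Real.cos_add_two_pi]
  have hshift : ∫ σ in (0:ℝ)..(2*π), g σ = ∫ σ in (b - π/2)..(b - π/2 + 2*π), g σ := by
    have := hper.intervalIntegral_add_eq 0 (b - π/2)
    simpa using this
  -- integrability
  have hgi : ∀ u v : ℝ, IntervalIntegrable g volume u v := by
    intro u v
    apply IntervalIntegrable.mono_fun' (g := fun _ => (1:ℝ)) intervalIntegrable_const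
    · apply Measurable.aestronglyMeasurable
      exact ((measurable_id.sub measurable_const).cos.const_mul _).mul
        ((meas_sign.comp (measurable_id.sub measurable_const).cos).neg)
    · filter_upwards with x
      simp only [hg, Real.norm_eq_abs, abs_mul, abs_neg]
      have h1 := Real.abs_cos_le_one (x-a)
      have h2 := sign_abs_le (Real.cos (x-b))
      have h3 := abs_nonneg (Real.cos (x-a))
      have h4 := abs_nonneg (Real.sign (Real.cos (x-b)))
      rw [show |(1:ℝ)/4| = 1/4 by norm_num]
      nlinarith
  have hae1 : ∀ᵐ x : ℝ, x ≠ b + π/2 := by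
    refine ae_iff.2 ?_
    simp
  have hae2 : ∀ᵐ x : ℝ, x ≠ b - π/2 + 2*π := by
    refine ae_iff.2 ?_
    simp
  have hpi := Real.pi_pos
  have hpiece1 : ∫ σ in (b - π/2)..(b + π/2), g σ
      = ∫ σ in (b - π/2)..(b + π/2), (-(1/4)) * Real.cos (σ - a) := by
    apply intervalIntegral.integral_congr_ae
    filter_upwards [hae1] with x hx hmem
    rw [Set.uIoc_of_le (by linarith)] at hmem
    have hxo : x ∈ Set.Ioo (b - π/2) (b + π/2) := ⟨hmem.1, lt_of_le_of_ne hmem.2 hx⟩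
    have hcpos : 0 < Real.cos (x - b) :=
      Real.cos_pos_of_mem_Ioo ⟨by simpa using by linarith [hxo.1], by linarith [hxo.2]⟩
    simp only [hg, Real.sign_of_pos hcpos]
    ring
  have hpiece2 : ∫ σ in (b + π/2)..(b - π/2 + 2*π), g σ
      = ∫ σ in (b + π/2)..(b - π/2 + 2*π), (1/4) * Real.cos (σ - a) := by
    apply intervalIntegral.integral_congr_ae
    filter_upwards [hae2] with x hx hmem
    rw [Set.uIoc_of_le (by linarith)] at hmem
    have hxo : x ∈ Set.Ioo (b + π/2) (b - π/2 + 2*π) := ⟨hmem.1, lt_of_le_of_ne hmem.2 hx⟩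
    have hcpos : 0 < Real.cos (x - b - π) :=
      Real.cos_pos_of_mem_Ioo ⟨by linarith [hxo.1], by linarith [hxo.2]⟩
    have hcneg : Real.cos (x - b) < 0 := by
      have := Real.cos_sub_pi (x - b)
      linarith
    simp only [hg, Real.sign_of_neg hcneg]
    ring
  have hcomp : ∀ (c u v : ℝ), ∫ σ in u..v, c * Real.cos (σ - a)
      = c * (Real.sin (v - a) - Real.sin (u - a)) := by
    intro c u v
    rw [intervalIntegral.integral_const_mul, intervalIntegral.integral_comp_sub_right (fun x => Real.cos x) a, integral_cos]
  rw [hshift, ← integral_add_adjacent_intervals (hgi (b - π/2) (b + π/2)) (hgi (b + π/2) (b - π/2 + 2*π)),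
    hpiece1, hpiece2, hcomp, hcomp]
  simp [Real.sin_sub, Real.sin_add, Real.cos_sub, Real.cos_add]
  ring


theorem numerator_correlation (a b : ℝ) :
    (1 / (2 * π)) *
      ∫ σ in (0:ℝ)..(2 * π),
        (1 / 4) * |Real.cos (σ - a)| * Real.sign (Real.cos (σ - a)) *
          (-Real.sign (Real.cos (σ - b)))
      = -(1 / (2 * π)) * Real.cos (a - b) := by
  have key : ∫ σ in (0:ℝ)..(2 * π),
        (1 / 4) * |Real.cos (σ - a)| * Real.sign (Real.cos (σ - a)) *
          (-Real.sign (Real.cos (σ - b)))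
      = ∫ σ in (0:ℝ)..(2*π), (1/4) * Real.cos (σ - a) * (-Real.sign (Real.cos (σ - b))) := by
    apply intervalIntegral.integral_congr
    intro σ _
    simp only
    rw [mul_assoc (1/4 : ℝ), abs_mul_sign']
  rw [key, main_aux]
  ring
end

section
/- For any real numbers a and b, with S¹_a(σ)=sgn(cos(σ−a)), S²_b(σ)=−sgn(cos(σ−b)), T'_{1,a}(σ)=(√(2π)/4)|cos(σ−a)|, T'_{2,b}(σ)=√(2π), one has (1/(2π))·∫₀^{2π} S¹_a(σ)·S²_b(σ)·T'_{1,a}(σ)·T'_{2,b}(σ) dσ = −cos(a−b). -/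
open Real

/-! Since `sign (cos (σ - a)) * |cos (σ - a)| = cos (σ - a)`, the integrand is
`-(π / 2) * sign (cos (σ - b)) * cos (σ - a)`. This function has period `π`, because both
factors change sign under `σ ↦ σ + π`, so its integral over `[0, 2π]` is twice its integral over
`[b - π/2, b + π/2]`, where `cos (σ - b) > 0`. There it is `∫ cos (σ - a) = 2 cos (a - b)`. -/

namespace Real

theorem sign_mul_abs (x : ℝ) : sign x * |x| = x := by
  rcases lt_trichotomy x 0 with h | rfl | h
  · rw [sign_of_neg h, abs_of_neg h]; ring
  · simp
  · rw [sign_of_pos h, abs_of_pos h, one_mul]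

theorem abs_sign_le_one (x : ℝ) : |sign x| ≤ 1 := by
  rcases sign_apply_eq x with h | h | h <;> rw [h] <;> norm_num

theorem measurable_sign : Measurable sign :=
  Measurable.ite (measurableSet_lt measurable_id measurable_const) measurable_const
    (Measurable.ite (measurableSet_lt measurable_const measurable_id) measurable_const
      measurable_const)

end Real

theorem intervalIntegrable_sign_comp_mul {f g : ℝ → ℝ} (hf : Measurable f) (hg : Continuous g)
    (t₁ t₂ : ℝ) : IntervalIntegrable (fun x => sign (f x) * g x) MeasureTheory.volume t₁ t₂ := by
  rw [intervalIntegrable_iff]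
  exact (hg.integrableOn_uIoc).bdd_mul (measurable_sign.comp hf).aestronglyMeasurable
    (c := 1) (Filter.Eventually.of_forall fun x => abs_sign_le_one (f x))

theorem periodic_sign_cos_sub_mul_cos_sub (a b : ℝ) :
    Function.Periodic (fun σ => sign (cos (σ - b)) * cos (σ - a)) π := by
  intro σ
  simp only [add_sub_right_comm σ π, cos_add_pi, sign_neg, neg_mul_neg]

theorem integral_sign_cos_sub_mul_cos_sub_of_half_period (a b : ℝ) :
    ∫ σ in (b - π / 2)..(b + π / 2), sign (cos (σ - b)) * cos (σ - a) = 2 * cos (a - b) := by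
  have hcos_pos : Set.EqOn (fun σ => sign (cos (σ - b)) * cos (σ - a)) (fun σ => cos (σ - a))
      (Set.Ioo (b - π / 2) (b + π / 2)) := fun σ hσ => by
    dsimp only
    rw [sign_of_pos (cos_pos_of_mem_Ioo ⟨by linarith [hσ.1], by linarith [hσ.2]⟩), one_mul]
  rw [intervalIntegral.integral_congr_Ioo_of_le (by linarith [pi_pos]) hcos_pos,
    intervalIntegral.integral_comp_sub_right (fun σ => cos σ), integral_cos,
    show b + π / 2 - a = π / 2 - (a - b) by ring, show b - π / 2 - a = -((a - b) + π / 2) by ring,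
    sin_neg, sin_pi_div_two_sub, sin_add_pi_div_two]
  ring

theorem integral_sign_cos_sub_mul_cos_sub (a b : ℝ) :
    ∫ σ in (0:ℝ)..(2 * π), sign (cos (σ - b)) * cos (σ - a) = 4 * cos (a - b) := by
  have hper := periodic_sign_cos_sub_mul_cos_sub a b
  have hint := intervalIntegrable_sign_comp_mul
    (measurable_cos.comp (measurable_id.sub_const b)) (continuous_cos.comp (continuous_sub_right a))
  calc ∫ σ in (0:ℝ)..(2 * π), sign (cos (σ - b)) * cos (σ - a)
      = ∫ σ in (0:ℝ)..0 + (2:ℤ) • π, sign (cos (σ - b)) * cos (σ - a) := by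
        rw [zero_add, two_zsmul, two_mul]
    _ = 2 * ∫ σ in (b - π / 2)..(b - π / 2) + π, sign (cos (σ - b)) * cos (σ - a) := by
        rw [hper.intervalIntegral_add_zsmul_eq 2 0 hint, hper.intervalIntegral_add_eq 0 (b - π / 2),
          zsmul_eq_mul, Int.cast_two]
    _ = 4 * cos (a - b) := by
        rw [show b - π / 2 + π = b + π / 2 by ring,
          integral_sign_cos_sub_mul_cos_sub_of_half_period]
        ring

theorem reduced_dynamics_epr (a b : ℝ) :
    (1 / (2 * π)) *
      ∫ σ in (0:ℝ)..(2 * π),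
        Real.sign (Real.cos (σ - a)) * (-Real.sign (Real.cos (σ - b))) *
          ((Real.sqrt (2 * π) / 4) * |Real.cos (σ - a)|) * Real.sqrt (2 * π)
      = -Real.cos (a - b) := by
  have hsqrt : sqrt (2 * π) * sqrt (2 * π) = 2 * π := mul_self_sqrt (by positivity)
  have hintegrand : ∀ σ, sign (cos (σ - a)) * (-sign (cos (σ - b))) *
      ((sqrt (2 * π) / 4) * |cos (σ - a)|) * sqrt (2 * π)
        = -(π / 2) * (sign (cos (σ - b)) * cos (σ - a)) := fun σ => by
    linear_combination (-(sign (cos (σ - b)) * sign (cos (σ - a)) * |cos (σ - a)| / 4)) * hsqrt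
      - (π / 2 * sign (cos (σ - b))) * Real.sign_mul_abs (cos (σ - a))
  simp only [hintegrand, intervalIntegral.integral_const_mul, integral_sign_cos_sub_mul_cos_sub]
  field_simp
  ring
end

section
/- Let (Ω, μ) be a probability space and for unit vectors x let S¹_x, S²_x : Ω → [−1,1] be measurable functions satisfying the singlet condition S¹_c = −S²_c μ-almost everywhere for every c. Then for all a, b, c: |E[S¹_a S²_b] − E[S¹_c S²_b]| − E[S¹_a S²_c] ≤ 1. -/
open MeasureTheory

theorem bell_inequality {Ω : Type*} [MeasurableSpace Ω] (μ : Measure Ω)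
    [IsProbabilityMeasure μ] {ι : Type*} (S1 S2 : ι → Ω → ℝ)
    (hm1 : ∀ x, Measurable (S1 x)) (hm2 : ∀ x, Measurable (S2 x))
    (hb1 : ∀ x ω, S1 x ω ∈ Set.Icc (-1 : ℝ) 1)
    (hb2 : ∀ x ω, S2 x ω ∈ Set.Icc (-1 : ℝ) 1)
    (hsinglet : ∀ c, S1 c =ᵐ[μ] fun ω => -S2 c ω)
    (a b c : ι) :
    |(∫ ω, S1 a ω * S2 b ω ∂μ) - ∫ ω, S1 c ω * S2 b ω ∂μ| -
        ∫ ω, S1 a ω * S2 c ω ∂μ ≤ 1 := by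
  have hint : ∀ x y, Integrable (fun ω => S1 x ω * S2 y ω) μ := by
    intro x y
    refine Integrable.mono' (integrable_const 1)
      ((hm1 x).mul (hm2 y)).aestronglyMeasurable (Filter.Eventually.of_forall fun ω => ?_)
    rw [Real.norm_eq_abs, abs_mul]
    calc |S1 x ω| * |S2 y ω| ≤ 1 * 1 := by
          apply mul_le_mul (abs_le.mpr ⟨(hb1 x ω).1, (hb1 x ω).2⟩)
            (abs_le.mpr ⟨(hb2 y ω).1, (hb2 y ω).2⟩) (abs_nonneg _) zero_le_one
      _ = 1 := one_mul 1
  have hint11 : Integrable (fun ω => S1 a ω * S1 c ω) μ := by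
    refine Integrable.mono' (integrable_const 1)
      ((hm1 a).mul (hm1 c)).aestronglyMeasurable (Filter.Eventually.of_forall fun ω => ?_)
    rw [Real.norm_eq_abs, abs_mul]
    calc |S1 a ω| * |S1 c ω| ≤ 1 * 1 := by
          apply mul_le_mul (abs_le.mpr ⟨(hb1 a ω).1, (hb1 a ω).2⟩)
            (abs_le.mpr ⟨(hb1 c ω).1, (hb1 c ω).2⟩) (abs_nonneg _) zero_le_one
      _ = 1 := one_mul 1
  -- E[S1 a * S2 c] = - E[S1 a * S1 c]
  have hce : (∫ ω, S1 a ω * S2 c ω ∂μ) = - ∫ ω, S1 a ω * S1 c ω ∂μ := by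
    rw [← integral_neg]
    refine integral_congr_ae ?_
    filter_upwards [hsinglet c] with ω hω
    simp only [hω]
    ring
  -- |∫ (ab - cb)| ≤ ∫ (1 - S1a S1c)
  have key : |(∫ ω, S1 a ω * S2 b ω ∂μ) - ∫ ω, S1 c ω * S2 b ω ∂μ|
      ≤ ∫ ω, (1 - S1 a ω * S1 c ω) ∂μ := by
    rw [← integral_sub (hint a b) (hint c b)]
    have := norm_integral_le_integral_norm (μ := μ) (f := fun ω => S1 a ω * S2 b ω - S1 c ω * S2 b ω)
    rw [Real.norm_eq_abs] at this
    refine this.trans ?_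
    refine integral_mono_of_nonneg (Filter.Eventually.of_forall fun ω => norm_nonneg _)
      ((integrable_const 1).sub hint11) (Filter.Eventually.of_forall fun ω => ?_)
    have h1 := hb1 a ω; have h2 := hb1 c ω; have h3 := hb2 b ω
    simp only [Set.mem_Icc] at h1 h2 h3
    simp only [Real.norm_eq_abs]
    have habs : |S1 a ω * S2 b ω - S1 c ω * S2 b ω| = |S1 a ω - S1 c ω| * |S2 b ω| := by
      rw [← abs_mul]; ring_nf
    have hb : |S2 b ω| ≤ 1 := abs_le.mpr h3
    have h4 : |S1 a ω - S1 c ω| ≤ 1 - S1 a ω * S1 c ω := by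
      rw [abs_le]
      constructor <;> nlinarith [h1.1, h1.2, h2.1, h2.2]
    calc |S1 a ω * S2 b ω - S1 c ω * S2 b ω| = |S1 a ω - S1 c ω| * |S2 b ω| := habs
      _ ≤ (1 - S1 a ω * S1 c ω) * 1 :=
          mul_le_mul h4 hb (abs_nonneg _) (by nlinarith [h1.1, h1.2, h2.1, h2.2])
      _ = 1 - S1 a ω * S1 c ω := mul_one _
  have hsplit : ∫ ω, (1 - S1 a ω * S1 c ω) ∂μ = 1 - ∫ ω, S1 a ω * S1 c ω ∂μ := by
    rw [integral_sub (integrable_const 1) hint11, integral_const]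
    simp
  rw [hce]
  linarith [key, hsplit.symm.le, hsplit.le]
end

section
/- Let (Ω, μ) be a probability space, Γ ⊆ Ω a measurable set with μ(Γ) > 0, and for each parameter x let S¹_x, S²_x : Ω → [−1,1] be measurable with S¹_c·χ_Γ = −S²_c·χ_Γ μ-a.e. for all c. Define the conditional correlation ⟨S¹_a S²_b⟩ := E[S¹_a S²_b χ_Γ]/μ(Γ). Then |⟨S¹_a S²_b⟩ − ⟨S¹_c S²_b⟩| − ⟨S¹_a S²_c⟩ ≤ 1/μ(Γ). -/
/-!
For numbers in `[-1, 1]` one has `|A B - C B| ≤ |A - C| ≤ 1 - A C`. Integrating this over `Γ`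
gives Bell's inequality `|E[A B] - E[C B]| + E[A C] ≤ μ(Γ) ≤ 1` for the unnormalised
correlations, and on `Γ` the singlet condition replaces `S²_c` by `-S¹_c`.
-/

open MeasureTheory

lemma abs_mul_sub_mul_add_mul_le_one {A B C : ℝ} (hA : A ∈ Set.Icc (-1 : ℝ) 1)
    (hB : B ∈ Set.Icc (-1 : ℝ) 1) (hC : C ∈ Set.Icc (-1 : ℝ) 1) :
    |A * B - C * B| + A * C ≤ 1 := by
  have hAC : |A - C| ≤ 1 - A * C := by
    rw [abs_le]
    constructor <;> nlinarith [hA.1, hA.2, hC.1, hC.2]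
  have hAB : |A * B - C * B| ≤ |A - C| := by
    rw [← sub_mul, abs_mul]
    exact mul_le_of_le_one_right (abs_nonneg _) (abs_le.2 hB)
  linarith

section

variable {Ω : Type*} [MeasurableSpace Ω] {ν : Measure Ω} [IsFiniteMeasure ν] {A B : Ω → ℝ}

lemma integrable_mul_of_mem_Icc (hA : AEStronglyMeasurable A ν) (hB : AEStronglyMeasurable B ν)
    (hA1 : ∀ ω, A ω ∈ Set.Icc (-1 : ℝ) 1) (hB1 : ∀ ω, B ω ∈ Set.Icc (-1 : ℝ) 1) :
    Integrable (fun ω => A ω * B ω) ν :=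
  .of_bound (hA.mul hB) 1 <| .of_forall fun ω => by
    rw [norm_mul]
    exact mul_le_one₀ (abs_le.2 (hA1 ω)) (norm_nonneg _) (abs_le.2 (hB1 ω))

theorem integral_bell_inequality {C : Ω → ℝ}
    (hA : AEStronglyMeasurable A ν) (hB : AEStronglyMeasurable B ν)
    (hC : AEStronglyMeasurable C ν) (hA1 : ∀ ω, A ω ∈ Set.Icc (-1 : ℝ) 1)
    (hB1 : ∀ ω, B ω ∈ Set.Icc (-1 : ℝ) 1) (hC1 : ∀ ω, C ω ∈ Set.Icc (-1 : ℝ) 1) :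
    |∫ ω, A ω * B ω ∂ν - ∫ ω, C ω * B ω ∂ν| + ∫ ω, A ω * C ω ∂ν ≤ ν.real Set.univ := by
  have hAB := integrable_mul_of_mem_Icc hA hB hA1 hB1
  have hCB := integrable_mul_of_mem_Icc hC hB hC1 hB1
  have hAC := integrable_mul_of_mem_Icc hA hC hA1 hC1
  calc |∫ ω, A ω * B ω ∂ν - ∫ ω, C ω * B ω ∂ν| + ∫ ω, A ω * C ω ∂ν
      ≤ ∫ ω, |A ω * B ω - C ω * B ω| ∂ν + ∫ ω, A ω * C ω ∂ν := by
        rw [← integral_sub hAB hCB]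
        gcongr
        exact abs_integral_le_integral_abs
    _ = ∫ ω, (|A ω * B ω - C ω * B ω| + A ω * C ω) ∂ν :=
        (integral_add (hAB.sub hCB).abs hAC).symm
    _ ≤ ∫ _, (1 : ℝ) ∂ν :=
        integral_mono ((hAB.sub hCB).abs.add hAC) (integrable_const 1)
          fun ω => abs_mul_sub_mul_add_mul_le_one (hA1 ω) (hB1 ω) (hC1 ω)
    _ = ν.real Set.univ := by simp

end

section

variable {Ω : Type*} [MeasurableSpace Ω] {μ : Measure Ω} {Γ : Set Ω}

lemma integral_mul_indicator_one (hΓ : MeasurableSet Γ) (f : Ω → ℝ) :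
    ∫ ω, f ω * Γ.indicator (fun _ => (1 : ℝ)) ω ∂μ = ∫ ω in Γ, f ω ∂μ := by
  simp_rw [← Set.indicator_mul_right, mul_one]
  exact integral_indicator hΓ

lemma ae_restrict_eq_neg_of_mul_indicator_one {f g : Ω → ℝ} (hΓ : MeasurableSet Γ)
    (h : (fun ω => f ω * Γ.indicator (fun _ => (1 : ℝ)) ω)
        =ᵐ[μ] fun ω => -(g ω * Γ.indicator (fun _ => (1 : ℝ)) ω)) :
    f =ᵐ[μ.restrict Γ] -g :=
  (ae_restrict_iff' hΓ).2 <| h.mono fun ω hω hmem => by simpa [hmem] using hω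

end

theorem bell_inequality_conditioned_general {Ω : Type*} [MeasurableSpace Ω] (μ : Measure Ω)
    [IsProbabilityMeasure μ] (Γ : Set Ω) (hΓ : MeasurableSet Γ)
    {ι : Type*} (S1 S2 : ι → Ω → ℝ)
    (hm1 : ∀ x, Measurable (S1 x)) (hm2 : ∀ x, Measurable (S2 x))
    (hb1 : ∀ x ω, S1 x ω ∈ Set.Icc (-1 : ℝ) 1)
    (hb2 : ∀ x ω, S2 x ω ∈ Set.Icc (-1 : ℝ) 1)
    (hsinglet : ∀ c, (fun ω => S1 c ω * Set.indicator Γ (fun _ => (1:ℝ)) ω)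
        =ᵐ[μ] fun ω => -(S2 c ω * Set.indicator Γ (fun _ => (1:ℝ)) ω))
    (a b c : ι) :
    |((∫ ω, S1 a ω * S2 b ω * Set.indicator Γ (fun _ => (1:ℝ)) ω ∂μ) / (μ Γ).toReal) -
        (∫ ω, S1 c ω * S2 b ω * Set.indicator Γ (fun _ => (1:ℝ)) ω ∂μ) / (μ Γ).toReal| -
      (∫ ω, S1 a ω * S2 c ω * Set.indicator Γ (fun _ => (1:ℝ)) ω ∂μ) / (μ Γ).toReal
      ≤ 1 / (μ Γ).toReal := by
  simp only [integral_mul_indicator_one hΓ, ← measureReal_def]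
  have hsinglet_c : ∫ ω in Γ, S1 a ω * S2 c ω ∂μ = -∫ ω in Γ, S1 a ω * S1 c ω ∂μ := by
    rw [← integral_neg]
    refine integral_congr_ae ?_
    filter_upwards [ae_restrict_eq_neg_of_mul_indicator_one hΓ (hsinglet c)] with ω hω
    simp [hω]
  have hbell := integral_bell_inequality (ν := μ.restrict Γ)
    (hm1 a).aestronglyMeasurable (hm2 b).aestronglyMeasurable (hm1 c).aestronglyMeasurable
    (hb1 a) (hb2 b) (hb1 c)
  rw [measureReal_restrict_apply_univ] at hbell
  have hΓ_le_one : μ.real Γ ≤ 1 := measureReal_le_one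
  rw [div_sub_div_same, abs_div, abs_of_nonneg measureReal_nonneg, div_sub_div_same, hsinglet_c]
  refine div_le_div_of_nonneg_right ?_ measureReal_nonneg
  linarith

theorem bell_inequality_conditioned {Ω : Type*} [MeasurableSpace Ω] (μ : Measure Ω)
    [IsProbabilityMeasure μ] (Γ : Set Ω) (hΓ : MeasurableSet Γ) (hΓpos : 0 < μ Γ)
    {ι : Type*} (S1 S2 : ι → Ω → ℝ)
    (hm1 : ∀ x, Measurable (S1 x)) (hm2 : ∀ x, Measurable (S2 x))
    (hb1 : ∀ x ω, S1 x ω ∈ Set.Icc (-1 : ℝ) 1)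
    (hb2 : ∀ x ω, S2 x ω ∈ Set.Icc (-1 : ℝ) 1)
    (hsinglet : ∀ c, (fun ω => S1 c ω * Set.indicator Γ (fun _ => (1:ℝ)) ω)
        =ᵐ[μ] fun ω => -(S2 c ω * Set.indicator Γ (fun _ => (1:ℝ)) ω))
    (a b c : ι) :
    |((∫ ω, S1 a ω * S2 b ω * Set.indicator Γ (fun _ => (1:ℝ)) ω ∂μ) / (μ Γ).toReal) -
        (∫ ω, S1 c ω * S2 b ω * Set.indicator Γ (fun _ => (1:ℝ)) ω ∂μ) / (μ Γ).toReal| -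
      (∫ ω, S1 a ω * S2 c ω * Set.indicator Γ (fun _ => (1:ℝ)) ω ∂μ) / (μ Γ).toReal
      ≤ 1 / (μ Γ).toReal :=
  bell_inequality_conditioned_general μ Γ hΓ S1 S2 hm1 hm2 hb1 hb2 hsinglet a b c
end

section
/- There exist real numbers a, b, c such that |−cos(a−b) + cos(c−b)| + cos(a−c) > 1; for example, with a = 0, b = π/2, c = π/4, |−cos(π/2) + cos(π/4)| + cos(π/4) = √2 > 1. Hence the EPR correlation −cos(a−b) violates Bell's inequality |⟨ab⟩−⟨cb⟩|−⟨ac⟩ ≤ 1. -/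
open Real

theorem epr_violates_bell :
    ∃ a b c : ℝ,
      |(-Real.cos (a - b)) + Real.cos (c - b)| + Real.cos (a - c) > 1 := by
  refine ⟨0, π/2, π/4, ?_⟩
  have h1 : (0:ℝ) - π/2 = -(π/2) := by ring
  have h2 : π/4 - π/2 = -(π/4) := by ring
  have h3 : (0:ℝ) - π/4 = -(π/4) := by ring
  rw [h1, h2, h3, Real.cos_neg, Real.cos_neg, Real.cos_pi_div_two, Real.cos_pi_div_four]
  rw [neg_zero, zero_add, abs_of_nonneg (by positivity)]
  nlinarith [Real.sq_sqrt (by norm_num : (2:ℝ) ≥ 0), Real.sqrt_nonneg 2]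
end

section
/- Let (Ω,μ) be a probability space and suppose for each unit vector x there are measurable functions F¹_x, F²_x : Ω → [−1,1] such that for all unit vectors a, b one has E[F¹_a F²_b] = −⟨a,b⟩ (the Euclidean inner product). Then a contradiction follows; i.e., no such family of [−1,1]-valued random variables on a single probability space can reproduce the EPR correlations −a·b for all pairs of unit vectors in ℝ³. -/
/-!
Perfect anticorrelation at `a = b` forces `F²_x = -F¹_x` almost surely, so all correlations are
correlations `E[F¹_x F¹_y] = ⟨x, y⟩` of a single family of `[-1, 1]`-valued random variables.
For such a family Bell's inequality `|E[XY] - E[XZ]| ≤ 1 - E[YZ]` holds, whereas the unit vectors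
`a = (1, 0, 0)`, `b = (3/5, 4/5, 0)`, `c = (-3/5, 4/5, 0)` give `|⟨a, b⟩ - ⟨a, c⟩| = 6/5` and
`1 - ⟨b, c⟩ = 18/25`.
-/

open MeasureTheory Set

lemma mul_mem_Icc_neg_one_one {x y : ℝ} (hx : x ∈ Icc (-1) 1) (hy : y ∈ Icc (-1) 1) :
    x * y ∈ Icc (-1) 1 := by
  rw [mem_Icc, ← abs_le] at *
  rw [abs_mul]
  exact mul_le_one₀ hx (abs_nonneg y) hy

lemma eq_neg_of_mul_eq_neg_one {x y : ℝ} (hx : x ∈ Icc (-1) 1) (hy : y ∈ Icc (-1) 1)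
    (h : x * y = -1) : y = -x := by
  obtain ⟨hx₁, hx₂⟩ := hx
  obtain ⟨hy₁, hy₂⟩ := hy
  nlinarith [sq_nonneg (x + y)]

lemma abs_sub_le_one_sub_mul {y z : ℝ} (hy : y ∈ Icc (-1) 1) (hz : z ∈ Icc (-1) 1) :
    |y - z| ≤ 1 - y * z := by
  obtain ⟨hy₁, hy₂⟩ := hy
  obtain ⟨hz₁, hz₂⟩ := hz
  -- `(1 - y z)² - (y - z)² = (1 - y²)(1 - z²)`
  refine abs_le_of_sq_le_sq ?_ (by nlinarith)
  nlinarith [mul_nonneg (by nlinarith : (0 : ℝ) ≤ 1 - y ^ 2) (by nlinarith : (0 : ℝ) ≤ 1 - z ^ 2)]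

lemma abs_mul_sub_mul_le_one_sub_mul {x y z : ℝ} (hx : x ∈ Icc (-1) 1) (hy : y ∈ Icc (-1) 1)
    (hz : z ∈ Icc (-1) 1) : |x * y - x * z| ≤ 1 - y * z :=
  calc |x * y - x * z| = |x| * |y - z| := by rw [← mul_sub, abs_mul]
    _ ≤ 1 * |y - z| := by gcongr; exact abs_le.mpr hx
    _ ≤ 1 - y * z := by rw [one_mul]; exact abs_sub_le_one_sub_mul hy hz

lemma exists_bell_violating_directions :
    ∃ a b c : EuclideanSpace ℝ (Fin 3), ‖a‖ = 1 ∧ ‖b‖ = 1 ∧ ‖c‖ = 1 ∧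
      1 - inner ℝ b c < |inner ℝ a b - inner ℝ a c| := by
  refine ⟨!₂[1, 0, 0], !₂[3 / 5, 4 / 5, 0], !₂[-3 / 5, 4 / 5, 0], ?_, ?_, ?_, ?_⟩ <;>
    norm_num [EuclideanSpace.norm_eq, PiLp.inner_apply, Fin.sum_univ_three, Matrix.cons_val_two]

section

variable {Ω : Type*} [MeasurableSpace Ω] {μ : Measure Ω}

lemma integrable_mul_of_mem_Icc_s11 [IsFiniteMeasure μ] {f g : Ω → ℝ}
    (hf : AEMeasurable f μ) (hg : AEMeasurable g μ)
    (hf₁ : ∀ᵐ ω ∂μ, f ω ∈ Icc (-1) 1) (hg₁ : ∀ᵐ ω ∂μ, g ω ∈ Icc (-1) 1) :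
    Integrable (fun ω => f ω * g ω) μ :=
  .of_mem_Icc (-1) 1 (hf.mul hg) <| by
    filter_upwards [hf₁, hg₁] with ω hfω hgω using mul_mem_Icc_neg_one_one hfω hgω

lemma ae_eq_neg_of_integral_mul_eq_neg_one [IsProbabilityMeasure μ] {f g : Ω → ℝ}
    (hf₁ : ∀ᵐ ω ∂μ, f ω ∈ Icc (-1) 1) (hg₁ : ∀ᵐ ω ∂μ, g ω ∈ Icc (-1) 1)
    (h : ∫ ω, f ω * g ω ∂μ = -1) : g =ᵐ[μ] -f := by
  have hfg : Integrable (fun ω => f ω * g ω) μ := .of_integral_ne_zero (by rw [h]; norm_num)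
  have hnonneg : 0 ≤ᵐ[μ] fun ω => 1 + f ω * g ω := by
    filter_upwards [hf₁, hg₁] with ω hfω hgω
    show 0 ≤ 1 + f ω * g ω
    linarith [(mul_mem_Icc_neg_one_one hfω hgω).1]
  have hzero : ∫ ω, (1 + f ω * g ω) ∂μ = 0 := by
    rw [integral_add (integrable_const 1) hfg, h]
    simp
  have hae := (integral_eq_zero_iff_of_nonneg_ae hnonneg ((integrable_const 1).add hfg)).mp hzero
  filter_upwards [hf₁, hg₁, hae] with ω hfω hgω hω
  exact eq_neg_of_mul_eq_neg_one hfω hgω (by linarith [show 1 + f ω * g ω = 0 from hω])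

theorem abs_integral_mul_sub_integral_mul_le [IsProbabilityMeasure μ] {X Y Z : Ω → ℝ}
    (hX : AEMeasurable X μ) (hY : AEMeasurable Y μ) (hZ : AEMeasurable Z μ)
    (hX₁ : ∀ᵐ ω ∂μ, X ω ∈ Icc (-1) 1) (hY₁ : ∀ᵐ ω ∂μ, Y ω ∈ Icc (-1) 1)
    (hZ₁ : ∀ᵐ ω ∂μ, Z ω ∈ Icc (-1) 1) :
    |∫ ω, X ω * Y ω ∂μ - ∫ ω, X ω * Z ω ∂μ| ≤ 1 - ∫ ω, Y ω * Z ω ∂μ := by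
  have hXY := integrable_mul_of_mem_Icc_s11 hX hY hX₁ hY₁
  have hXZ := integrable_mul_of_mem_Icc_s11 hX hZ hX₁ hZ₁
  have hYZ := integrable_mul_of_mem_Icc_s11 hY hZ hY₁ hZ₁
  calc |∫ ω, X ω * Y ω ∂μ - ∫ ω, X ω * Z ω ∂μ|
      = |∫ ω, (X ω * Y ω - X ω * Z ω) ∂μ| := by rw [integral_sub hXY hXZ]
    _ ≤ ∫ ω, |X ω * Y ω - X ω * Z ω| ∂μ := abs_integral_le_integral_abs
    _ ≤ ∫ ω, (1 - Y ω * Z ω) ∂μ := by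
      refine integral_mono_ae (hXY.sub hXZ).abs ((integrable_const 1).sub hYZ) ?_
      filter_upwards [hX₁, hY₁, hZ₁] with ω hXω hYω hZω
      exact abs_mul_sub_mul_le_one_sub_mul hXω hYω hZω
    _ = 1 - ∫ ω, Y ω * Z ω ∂μ := by
      rw [integral_sub (integrable_const 1) hYZ]
      simp

end

theorem no_classical_epr_general {Ω : Type*} [MeasurableSpace Ω] (μ : Measure Ω)
    [IsProbabilityMeasure μ]
    (F1 F2 : EuclideanSpace ℝ (Fin 3) → Ω → ℝ)
    (hm1 : ∀ x, ‖x‖ = 1 → Measurable (F1 x))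
    (hb1 : ∀ x, ‖x‖ = 1 → ∀ ω, F1 x ω ∈ Set.Icc (-1 : ℝ) 1)
    (hb2 : ∀ x, ‖x‖ = 1 → ∀ ω, F2 x ω ∈ Set.Icc (-1 : ℝ) 1)
    (hEPR : ∀ a b : EuclideanSpace ℝ (Fin 3), ‖a‖ = 1 → ‖b‖ = 1 →
      ∫ ω, F1 a ω * F2 b ω ∂μ = -(inner ℝ a b : ℝ)) :
    False := by
  have hanti : ∀ x, ‖x‖ = 1 → F2 x =ᵐ[μ] -F1 x := fun x hx =>
    ae_eq_neg_of_integral_mul_eq_neg_one (ae_of_all _ (hb1 x hx)) (ae_of_all _ (hb2 x hx))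
      (by rw [hEPR x x hx hx, real_inner_self_eq_norm_sq, hx]; norm_num)
  have hcorr : ∀ x y, ‖x‖ = 1 → ‖y‖ = 1 → ∫ ω, F1 x ω * F1 y ω ∂μ = inner ℝ x y := by
    intro x y hx hy
    calc ∫ ω, F1 x ω * F1 y ω ∂μ = ∫ ω, -(F1 x ω * F2 y ω) ∂μ := by
          refine integral_congr_ae ?_
          filter_upwards [hanti y hy] with ω hω
          simp [hω]
      _ = inner ℝ x y := by rw [integral_neg, hEPR x y hx hy, neg_neg]
  obtain ⟨a, b, c, ha, hb, hc, hviolation⟩ := exists_bell_violating_directions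
  have hbell := abs_integral_mul_sub_integral_mul_le (μ := μ)
    (hm1 a ha).aemeasurable (hm1 b hb).aemeasurable (hm1 c hc).aemeasurable
    (ae_of_all _ (hb1 a ha)) (ae_of_all _ (hb1 b hb)) (ae_of_all _ (hb1 c hc))
  rw [hcorr a b ha hb, hcorr a c ha hc, hcorr b c hb hc] at hbell
  exact hviolation.not_ge hbell

theorem no_classical_epr {Ω : Type*} [MeasurableSpace Ω] (μ : Measure Ω)
    [IsProbabilityMeasure μ]
    (F1 F2 : EuclideanSpace ℝ (Fin 3) → Ω → ℝ)
    (hm1 : ∀ x, ‖x‖ = 1 → Measurable (F1 x))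
    (hm2 : ∀ x, ‖x‖ = 1 → Measurable (F2 x))
    (hb1 : ∀ x, ‖x‖ = 1 → ∀ ω, F1 x ω ∈ Set.Icc (-1 : ℝ) 1)
    (hb2 : ∀ x, ‖x‖ = 1 → ∀ ω, F2 x ω ∈ Set.Icc (-1 : ℝ) 1)
    (hEPR : ∀ a b : EuclideanSpace ℝ (Fin 3), ‖a‖ = 1 → ‖b‖ = 1 →
      ∫ ω, F1 a ω * F2 b ω ∂μ = -(inner ℝ a b : ℝ)) :
    False :=
  no_classical_epr_general μ F1 F2 hm1 hb1 hb2 hEPR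
end
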